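/- arXiv:1008.2697 — 4 statements merged into one kernel-verified Lean document; each statement's English description precedes it below -/
import Mathlib

section
/- Let Y be a real random variable with distribution function F, and let V be uniform on [0,1] independent of Y. Define the distributional transform F̃(x,V) = F(x⁻) + V·(F(x) − F(x⁻)), where F(x⁻) is the left limit of F at x. Then F̃(Y,V) is uniformly distributed on [0,1]. -/
/-!
Fix `t ∈ (0, 1)` and let `q` be the `t`-quantile of `F`: `F < t` on `(-∞, q)` and `t ≤ F q`.
Since `F(x⁻) ≤ F̃(x, v) ≤ F x` for `v ∈ [0, 1]`, the event `F̃(Y, V) < t` is `{Y < q}` together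
with `{Y = q, V · (F q - F(q⁻)) < t - F(q⁻)}`. By independence its probability is
`F(q⁻) + (F q - F(q⁻)) · (t - F(q⁻)) / (F q - F(q⁻)) = t`, and a probability measure on `ℝ`
giving mass `t` to every `(-∞, t)` with `t ∈ (0, 1)` is the uniform distribution.
-/

open MeasureTheory ProbabilityTheory Function Set Filter Topology

noncomputable def distribTransform (F : ℝ → ℝ) (x v : ℝ) : ℝ :=
  leftLim F x + v * (F x - leftLim F x)

lemma measurable_distribTransform {F : ℝ → ℝ} (hF : Monotone F) :
    Measurable (uncurry (distribTransform F)) :=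
  (hF.leftLim.measurable.comp measurable_fst).add
    (measurable_snd.mul ((hF.measurable.comp measurable_fst).sub
      (hF.leftLim.measurable.comp measurable_fst)))

lemma distribTransform_lt_iff {F : ℝ → ℝ} (hF : Monotone F) {q t x v : ℝ}
    (hv : v ∈ Icc (0 : ℝ) 1) (hlt : ∀ u < q, F u < t) (hle : t ≤ F q) :
    distribTransform F x v < t ↔
      x < q ∨ x = q ∧ (F q - leftLim F q) * v < t - leftLim F q := by
  have hGF : leftLim F x ≤ F x := hF.leftLim_le le_rfl
  unfold distribTransform
  rcases lt_trichotomy x q with hx | rfl | hx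
  · have := hlt x hx
    simp only [hx, true_or, iff_true]
    nlinarith [hv.2]
  · simp only [lt_irrefl, false_or, true_and]
    constructor <;> intro <;> linarith
  · have := hF.le_leftLim hx
    simp only [hx.not_gt, hx.ne', false_or, false_and, iff_false, not_lt]
    nlinarith [hv.1]

lemma StieltjesFunction.exists_quantile (f : StieltjesFunction ℝ) {t : ℝ}
    (hbot : ∃ x, f x < t) (htop : ∃ x, t ≤ f x) :
    ∃ q, (∀ u < q, f u < t) ∧ t ≤ f q := by
  obtain ⟨x₀, hx₀⟩ := hbot
  have hbdd : BddBelow {x | t ≤ f x} :=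
    ⟨x₀, fun x hx => le_of_lt (f.mono.reflect_lt (hx₀.trans_le hx))⟩
  refine ⟨sInf {x | t ≤ f x}, fun u hu => not_le.1 fun h => hu.not_ge (csInf_le hbdd h), ?_⟩
  refine ge_of_tendsto ((f.right_continuous _).tendsto.mono_left
    (nhdsWithin_mono _ Ioi_subset_Ici_self)) (eventually_nhdsWithin_of_forall fun x hx => ?_)
  obtain ⟨s, hs, hsx⟩ := (csInf_lt_iff hbdd htop).1 hx
  exact hs.trans (f.mono hsx.le)

section Cdf

variable (μ : Measure ℝ) [IsProbabilityMeasure μ]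

lemma measure_Iio_eq_leftLim_cdf (x : ℝ) : μ (Iio x) = ENNReal.ofReal (leftLim (cdf μ) x) := by
  conv_lhs => rw [← measure_cdf μ]
  rw [(cdf μ).measure_Iio (tendsto_cdf_atBot μ), sub_zero]

lemma measure_singleton_eq_cdf_sub_leftLim (x : ℝ) :
    μ {x} = ENNReal.ofReal (cdf μ x - leftLim (cdf μ) x) := by
  rw [← (cdf μ).measure_singleton, measure_cdf]

end Cdf

lemma exists_cdf_quantile (μ : Measure ℝ) {t : ℝ} (ht : t ∈ Ioo (0 : ℝ) 1) :
    ∃ q, (∀ u < q, cdf μ u < t) ∧ t ≤ cdf μ q :=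
  (cdf μ).exists_quantile ((tendsto_cdf_atBot μ).eventually (eventually_lt_nhds ht.1)).exists
    (((tendsto_cdf_atTop μ).eventually (eventually_gt_nhds ht.2)).exists.imp fun _ => le_of_lt)

lemma uniform_measure_Iio {t : ℝ} (ht : t ∈ Icc (0 : ℝ) 1) :
    volume.restrict (Icc (0 : ℝ) 1) (Iio t) = ENNReal.ofReal t := by
  have : Iio t ∩ Icc 0 1 = Ico 0 t := by
    ext x
    simp only [mem_inter_iff, mem_Iio, mem_Icc, mem_Ico]
    constructor
    · rintro ⟨hxt, hx0, -⟩
      exact ⟨hx0, hxt⟩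
    · rintro ⟨hx0, hxt⟩
      exact ⟨hxt, hx0, hxt.le.trans ht.2⟩
  rw [Measure.restrict_apply measurableSet_Iio, this, Real.volume_Ico, sub_zero]

lemma measure_Iic_eq_of_measure_Iio {ν : Measure ℝ} [IsProbabilityMeasure ν]
    (h : ∀ t ∈ Ioo (0 : ℝ) 1, ν (Iio t) = ENNReal.ofReal t) (a : ℝ) :
    ν (Iic a) = ENNReal.ofReal (max 0 (min a 1)) := by
  have hreal : ∀ t ∈ Ioo (0 : ℝ) 1, ν.real (Iio t) = t := fun t ht => by
    rw [measureReal_def, h t ht, ENNReal.toReal_ofReal ht.1.le]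
  rw [← ofReal_measureReal]
  congr 1
  apply le_antisymm
  · refine le_of_forall_gt_imp_ge_of_dense fun s hs => ?_
    rcases lt_or_ge s 1 with hs1 | hs1
    · have hs0 : 0 < s := (le_max_left _ _).trans_lt hs
      have has : a < s := by
        by_contra! h'
        exact hs.not_ge (le_max_of_le_right (le_min h' hs1.le))
      calc ν.real (Iic a) ≤ ν.real (Iio s) := measureReal_mono (Iic_subset_Iio.2 has)
        _ = s := hreal s ⟨hs0, hs1⟩
    · exact measureReal_le_one.trans hs1
  · refine le_of_forall_lt_imp_le_of_dense fun s hs => ?_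
    rcases le_or_gt s 0 with hs0 | hs0
    · exact hs0.trans measureReal_nonneg
    · have hs' : s < min a 1 := lt_max_iff.1 hs |>.resolve_left hs0.not_gt
      calc s = ν.real (Iio s) := (hreal s ⟨hs0, hs'.trans_le (min_le_right _ _)⟩).symm
        _ ≤ ν.real (Iic a) := measureReal_mono (Iio_subset_Iic (hs'.le.trans (min_le_left _ _)))

lemma eq_uniform_of_measure_Iio {ν : Measure ℝ} [IsProbabilityMeasure ν]
    (h : ∀ t ∈ Ioo (0 : ℝ) 1, ν (Iio t) = ENNReal.ofReal t) :
    ν = volume.restrict (Icc (0 : ℝ) 1) := by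
  have : IsProbabilityMeasure (volume.restrict (Icc (0 : ℝ) 1)) :=
    ⟨by simp⟩
  refine Measure.ext_of_Iic _ _ fun a => ?_
  rw [measure_Iic_eq_of_measure_Iio h, measure_Iic_eq_of_measure_Iio
    (fun t ht => uniform_measure_Iio (Ioo_subset_Icc_self ht))]

section UniformRandomVariable

variable {Ω : Type*} [MeasurableSpace Ω] {P : Measure Ω} {V : Ω → ℝ}

lemma ae_mem_Icc_of_map_eq_uniform (hV : Measurable V)
    (hVunif : P.map V = volume.restrict (Icc (0 : ℝ) 1)) : ∀ᵐ ω ∂P, V ω ∈ Icc (0 : ℝ) 1 :=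
  ae_of_ae_map hV.aemeasurable (hVunif ▸ ae_restrict_mem measurableSet_Icc)

lemma ofReal_mul_measure_mul_lt_of_map_eq_uniform (hV : Measurable V)
    (hVunif : P.map V = volume.restrict (Icc (0 : ℝ) 1)) {a b : ℝ} (hb : 0 ≤ b) (hba : b ≤ a) :
    ENNReal.ofReal a * P (V ⁻¹' {v | a * v < b}) = ENNReal.ofReal b := by
  rcases (hb.trans hba).eq_or_lt with rfl | ha
  · simp [le_antisymm hba hb]
  have hset : {v : ℝ | a * v < b} = Iio (b / a) := by
    ext v
    exact (lt_div_iff₀' ha).symm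
  rw [hset, ← Measure.map_apply hV measurableSet_Iio, hVunif,
    uniform_measure_Iio ⟨div_nonneg hb ha.le, (div_le_one ha).2 hba⟩, ← ENNReal.ofReal_mul ha.le,
    mul_div_cancel₀ b ha.ne']

end UniformRandomVariable

lemma measure_distribTransform_cdf_lt {Ω : Type*} [MeasurableSpace Ω] {P : Measure Ω}
    [IsProbabilityMeasure P] {Y V : Ω → ℝ} (hY : Measurable Y) (hV : Measurable V)
    (hVunif : P.map V = volume.restrict (Icc (0 : ℝ) 1)) (hindep : IndepFun Y V P)
    {t : ℝ} (ht : t ∈ Ioo (0 : ℝ) 1) :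
    P {ω | distribTransform (cdf (P.map Y)) (Y ω) (V ω) < t} = ENNReal.ofReal t := by
  set μ := P.map Y
  have : IsProbabilityMeasure μ := Measure.isProbabilityMeasure_map hY.aemeasurable
  obtain ⟨q, hlt, hle⟩ := exists_cdf_quantile μ ht
  set F := cdf μ
  set G := leftLim F q
  have hGt : G ≤ t := le_of_tendsto (F.mono.tendsto_leftLim q)
    (eventually_nhdsWithin_of_forall fun u hu => (hlt u hu).le)
  have hG0 : 0 ≤ G := (cdf_nonneg μ (q - 1)).trans (F.mono.le_leftLim (sub_one_lt q))
  have hevent : {ω | distribTransform F (Y ω) (V ω) < t} =ᵐ[P]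
      (Y ⁻¹' Iio q ∪ (Y ⁻¹' {q} ∩ V ⁻¹' {v | (F q - G) * v < t - G}) : Set Ω) := by
    filter_upwards [ae_mem_Icc_of_map_eq_uniform hV hVunif] with ω hω
    exact propext (distribTransform_lt_iff F.mono hω hlt hle)
  have hdisj : Disjoint (Y ⁻¹' Iio q) (Y ⁻¹' {q} ∩ V ⁻¹' {v | (F q - G) * v < t - G}) :=
    Set.disjoint_left.2 fun ω h₁ h₂ => (h₁ : Y ω < q).ne h₂.1
  have hmeas : MeasurableSet {v : ℝ | (F q - G) * v < t - G} :=
    measurableSet_lt (measurable_const.mul measurable_id) measurable_const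
  rw [measure_congr hevent, measure_union hdisj ((hY (measurableSet_singleton q)).inter (hV hmeas)),
    hindep.measure_inter_preimage_eq_mul _ _ (measurableSet_singleton q) hmeas,
    ← Measure.map_apply hY measurableSet_Iio, ← Measure.map_apply hY (measurableSet_singleton q),
    measure_Iio_eq_leftLim_cdf, measure_singleton_eq_cdf_sub_leftLim,
    ofReal_mul_measure_mul_lt_of_map_eq_uniform hV hVunif (sub_nonneg.2 hGt) (by linarith),
    ← ENNReal.ofReal_add hG0 (sub_nonneg.2 hGt), add_sub_cancel]

/-- The distributional transform `F̃(Y,V) = F(Y⁻) + V·(F(Y) − F(Y⁻))` of a random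
variable `Y` with cdf `F`, where `V` is uniform on `[0,1]` and independent of `Y`,
is uniformly distributed on `[0,1]`. -/
theorem stmt_0 {Ω : Type*} [MeasurableSpace Ω] (P : Measure Ω) [IsProbabilityMeasure P]
    (Y V : Ω → ℝ) (hY : Measurable Y) (hV : Measurable V)
    (hVunif : Measure.map V P = volume.restrict (Set.Icc (0:ℝ) 1))
    (hindep : IndepFun Y V P)
    (F : ℝ → ℝ) (hF : ∀ x, F x = (P {ω | Y ω ≤ x}).toReal) :
    Measure.map (fun ω => leftLim F (Y ω) + V ω * (F (Y ω) - leftLim F (Y ω))) P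
      = volume.restrict (Set.Icc (0:ℝ) 1) := by
  have := Measure.isProbabilityMeasure_map (μ := P) hY.aemeasurable
  obtain rfl : F = cdf (P.map Y) := funext fun x => by
    rw [hF, cdf_eq_real, map_measureReal_apply hY measurableSet_Iic]
    rfl
  have hmeas : Measurable fun ω => distribTransform (cdf (P.map Y)) (Y ω) (V ω) :=
    (measurable_distribTransform (cdf _).mono).comp (hY.prodMk hV)
  change P.map (fun ω => distribTransform _ (Y ω) (V ω)) = _
  have := Measure.isProbabilityMeasure_map (μ := P) hmeas.aemeasurable
  refine eq_uniform_of_measure_Iio fun t ht => ?_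
  rw [Measure.map_apply hmeas measurableSet_Iio]
  exact measure_distribTransform_cdf_lt hY hV hVunif hindep ht
end

section
/- Let X_s, X_t be real random variables with distribution functions F_s, F_t, and suppose P(X_s ≤ x < X_t) ≤ C and P(X_t ≤ x < X_s) ≤ C for all x ∈ ℝ. Define τ²((s,x),(t,y)) = E(1_{X_s ≤ x} − 1_{X_t ≤ y})². Then for all x, y ∈ ℝ: τ²((s,x),(t,y)) ≤ min(|F_s(y) − F_s(x)|, |F_t(y) − F_t(x)|) + 2C. -/
/-!
The squared distance is the probability of the symmetric difference `{X_s ≤ x} ∆ {X_t ≤ y}`,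
and symmetric difference satisfies the triangle inequality. Passing through `{X_s ≤ y}` splits it
into `{X_s ≤ x} ∆ {X_s ≤ y}`, of probability `|F_s(y) - F_s(x)|`, and `{X_s ≤ y} ∆ {X_t ≤ y}`,
which is the union of the two crossing events at level `y`, each of probability at most `C`.
Passing through `{X_t ≤ x}` instead gives the bound with `F_t`.
-/

open MeasureTheory Set
open scoped symmDiff

lemma sq_ite_sub_ite_eq_indicator_symmDiff {Ω : Type*} (p q : Ω → Prop) [DecidablePred p]
    [DecidablePred q] (ω : Ω) :
    ((if p ω then (1 : ℝ) else 0) - if q ω then 1 else 0) ^ 2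
      = ({ω | p ω} ∆ {ω | q ω}).indicator 1 ω := by
  by_cases hp : p ω <;> by_cases hq : q ω <;> simp [indicator, mem_symmDiff, hp, hq]

lemma setOf_le_symmDiff_setOf_le {Ω : Type*} (X Y : Ω → ℝ) (x : ℝ) :
    {ω | X ω ≤ x} ∆ {ω | Y ω ≤ x} = {ω | X ω ≤ x ∧ x < Y ω} ∪ {ω | Y ω ≤ x ∧ x < X ω} := by
  ext ω
  simp [mem_symmDiff, not_le]

section

variable {Ω : Type*} [MeasurableSpace Ω]

lemma integral_sq_ite_sub_ite (μ : Measure Ω) {p q : Ω → Prop} [DecidablePred p]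
    [DecidablePred q] (hp : MeasurableSet {ω | p ω}) (hq : MeasurableSet {ω | q ω}) :
    ∫ ω, ((if p ω then (1 : ℝ) else 0) - if q ω then 1 else 0) ^ 2 ∂μ
      = μ.real ({ω | p ω} ∆ {ω | q ω}) := by
  simp_rw [sq_ite_sub_ite_eq_indicator_symmDiff p q]
  exact integral_indicator_one (hp.symmDiff hq)

lemma measureReal_setOf_le_symmDiff_setOf_le (μ : Measure Ω) [IsFiniteMeasure μ] {X : Ω → ℝ}
    (hX : Measurable X) (x y : ℝ) :
    μ.real ({ω | X ω ≤ x} ∆ {ω | X ω ≤ y})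
      = |μ.real {ω | X ω ≤ y} - μ.real {ω | X ω ≤ x}| := by
  wlog hxy : x ≤ y generalizing x y
  · rw [symmDiff_comm, abs_sub_comm]
    exact this y x (le_of_not_ge hxy)
  have hsub : {ω | X ω ≤ x} ⊆ {ω | X ω ≤ y} := fun ω hω => le_trans hω hxy
  rw [symmDiff_of_le hsub, measureReal_sdiff hsub (hX measurableSet_Iic),
    abs_of_nonneg (sub_nonneg.mpr (measureReal_mono hsub))]

end

theorem stmt_5_general {Ω : Type*} [MeasurableSpace Ω] (P : Measure Ω) [IsProbabilityMeasure P]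
    (Xs Xt : Ω → ℝ) (hXs : Measurable Xs) (hXt : Measurable Xt)
    (C : ℝ)
    (h1 : ∀ x : ℝ, (P {ω | Xs ω ≤ x ∧ x < Xt ω}).toReal ≤ C)
    (h2 : ∀ x : ℝ, (P {ω | Xt ω ≤ x ∧ x < Xs ω}).toReal ≤ C)
    (Fs Ft : ℝ → ℝ)
    (hFs : ∀ x, Fs x = (P {ω | Xs ω ≤ x}).toReal)
    (hFt : ∀ x, Ft x = (P {ω | Xt ω ≤ x}).toReal) :
    ∀ x y : ℝ,
      (∫ ω, ((if Xs ω ≤ x then (1:ℝ) else 0) - (if Xt ω ≤ y then (1:ℝ) else 0)) ^ 2 ∂P)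
        ≤ min (|Fs y - Fs x|) (|Ft y - Ft x|) + 2 * C := by
  intro x y
  have crossing (z : ℝ) : P.real ({ω | Xs ω ≤ z} ∆ {ω | Xt ω ≤ z}) ≤ 2 * C := by
    rw [setOf_le_symmDiff_setOf_le, two_mul]
    exact (measureReal_union_le _ _).trans (add_le_add (h1 z) (h2 z))
  rw [integral_sq_ite_sub_ite P (p := (Xs · ≤ x)) (q := (Xt · ≤ y))
    (hXs measurableSet_Iic) (hXt measurableSet_Iic), ← min_add_add_right]
  refine le_min ?_ ?_
  · calc P.real ({ω | Xs ω ≤ x} ∆ {ω | Xt ω ≤ y})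
        ≤ P.real ({ω | Xs ω ≤ x} ∆ {ω | Xs ω ≤ y}) + P.real ({ω | Xs ω ≤ y} ∆ {ω | Xt ω ≤ y}) :=
          measureReal_symmDiff_le _
      _ ≤ |Fs y - Fs x| + 2 * C := by
          rw [measureReal_setOf_le_symmDiff_setOf_le P hXs, hFs, hFs]
          exact add_le_add le_rfl (crossing y)
  · calc P.real ({ω | Xs ω ≤ x} ∆ {ω | Xt ω ≤ y})
        ≤ P.real ({ω | Xs ω ≤ x} ∆ {ω | Xt ω ≤ x}) + P.real ({ω | Xt ω ≤ x} ∆ {ω | Xt ω ≤ y}) :=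
          measureReal_symmDiff_le _
      _ ≤ |Ft y - Ft x| + 2 * C := by
          rw [measureReal_setOf_le_symmDiff_setOf_le P hXt, hFt, hFt, add_comm]
          exact add_le_add le_rfl (crossing x)

/-- If `P(X_s ≤ x < X_t) ≤ C` and `P(X_t ≤ x < X_s) ≤ C` for all `x`, then the
squared `L²` distance of indicators satisfies
`τ²((s,x),(t,y)) ≤ min(|F_s(y) − F_s(x)|, |F_t(y) − F_t(x)|) + 2C`. -/
theorem stmt_5 {Ω : Type*} [MeasurableSpace Ω] (P : Measure Ω) [IsProbabilityMeasure P]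
    (Xs Xt : Ω → ℝ) (hXs : Measurable Xs) (hXt : Measurable Xt)
    (C : ℝ) (hC : 0 ≤ C)
    (h1 : ∀ x : ℝ, (P {ω | Xs ω ≤ x ∧ x < Xt ω}).toReal ≤ C)
    (h2 : ∀ x : ℝ, (P {ω | Xt ω ≤ x ∧ x < Xs ω}).toReal ≤ C)
    (Fs Ft : ℝ → ℝ)
    (hFs : ∀ x, Fs x = (P {ω | Xs ω ≤ x}).toReal)
    (hFt : ∀ x, Ft x = (P {ω | Xt ω ≤ x}).toReal) :
    ∀ x y : ℝ,
      (∫ ω, ((if Xs ω ≤ x then (1:ℝ) else 0) - (if Xt ω ≤ y then (1:ℝ) else 0)) ^ 2 ∂P)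
        ≤ min (|Fs y - Fs x|) (|Ft y - Ft x|) + 2 * C :=
  stmt_5_general P Xs Xt hXs hXt C h1 h2 Fs Ft hFs hFt
end

section
/- Let B₁, …, B_n be independent standard Brownian motions on [0,1] started at 0, and let 𝒞_Q = {C_{t,y} : t, y ∈ ℚ, 0 ≤ t ≤ 1} where C_{t,y} = {z ∈ C[0,1] : z(t) ≤ y}. Then with probability one, the class 𝒞_Q shatters {B₁, …, B_n}, i.e. card{C ∩ {B₁,…,B_n} : C ∈ 𝒞_Q} = 2^n. -/
/-!
Fix `S` and the signs `ε i = -1` for `i ∈ S`, `ε i = 1` otherwise. Along the times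
`tₖ = c⁻ᵏ` with `c` large, let `sₖ = √(4 tₖ₊₁ log (k + 2))`. The events "`ε i` times the
increment of `B i` over `[tₖ₊₁, tₖ]` exceeds `2 sₖ` for every `i`" have probabilities of order
at least `1 / k` and are pairwise independent (increments over disjoint intervals), so by
Chebyshev's inequality (the second Borel–Cantelli lemma for pairwise independent events) they
occur infinitely often. By the first Borel–Cantelli lemma, `|B i (tₖ₊₁)| < sₖ` eventually. At
such a `k`, `ε i * B i (tₖ) > sₖ > 0`, so `{z | z (tₖ) ≤ 0}` picks out exactly the paths in `S`.
-/

open MeasureTheory ProbabilityTheory Set Filter Real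
open scoped NNReal

section GaussianTails

variable {Ω : Type*} {mΩ : MeasurableSpace Ω} {μ : Measure Ω} {X : Ω → ℝ} {c : ℝ≥0}

lemma ProbabilityTheory.HasSubgaussianMGF.measureReal_abs_ge_le [IsFiniteMeasure μ]
    (h : HasSubgaussianMGF X c μ) {ε : ℝ} (hε : 0 ≤ ε) :
    μ.real {ω | ε ≤ |X ω|} ≤ 2 * exp (-ε ^ 2 / (2 * c)) := by
  have hsplit : {ω | ε ≤ |X ω|} = {ω | ε ≤ X ω} ∪ {ω | ε ≤ (-X) ω} := by
    ext ω
    simp only [mem_ofPred_eq, mem_union, Pi.neg_apply, le_abs', le_neg]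
    tauto
  calc μ.real {ω | ε ≤ |X ω|}
      ≤ μ.real {ω | ε ≤ X ω} + μ.real {ω | ε ≤ (-X) ω} := hsplit ▸ measureReal_union_le _ _
    _ ≤ exp (-ε ^ 2 / (2 * c)) + exp (-ε ^ 2 / (2 * c)) :=
        add_le_add (h.measure_ge_le hε) (h.neg.measure_ge_le hε)
    _ = 2 * exp (-ε ^ 2 / (2 * c)) := by ring

lemma hasSubgaussianMGF_of_map_eq_gaussianReal (hX : AEMeasurable X μ)
    (h : μ.map X = gaussianReal 0 c) : HasSubgaussianMGF X c μ := by
  rw [← HasSubgaussianMGF.id_map_iff hX, h]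
  exact ⟨integrable_exp_mul_gaussianReal, by simp [mgf_id_gaussianReal]⟩

lemma map_const_mul_eq_gaussianReal (hX : Measurable X) (h : μ.map X = gaussianReal 0 c)
    {ε : ℝ} (hε : ε ^ 2 = 1) : μ.map (fun ω ↦ ε * X ω) = gaussianReal 0 c := by
  rw [show (fun ω ↦ ε * X ω) = (ε * ·) ∘ X from rfl,
    ← Measure.map_map (measurable_const_mul ε) hX, h, gaussianReal_map_const_mul, mul_zero]
  congr
  ext
  simp [hε]

lemma measureReal_gaussianReal_eq_integral {v : ℝ≥0} (hv : v ≠ 0) (s : Set ℝ) :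
    (gaussianReal 0 v).real s = ∫ x in s, gaussianPDFReal 0 v x := by
  rw [measureReal_def, gaussianReal_apply_eq_integral 0 hv,
    ENNReal.toReal_ofReal (setIntegral_nonneg_of_ae (ae_of_all _ (gaussianPDFReal_nonneg 0 v)))]

lemma inv_sqrt_two_pi_mul_exp_le_gaussianReal_Ioi {v : ℝ≥0} (hv : v ≠ 0) {a : ℝ} (ha : 0 ≤ a) :
    (√(2 * π))⁻¹ * exp (-(a ^ 2 / v) - 1) ≤ (gaussianReal 0 v).real (Ioi a) := by
  have hv0 : (0 : ℝ) < v := by positivity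
  have hsv : 0 < √(v : ℝ) := Real.sqrt_pos.2 hv0
  -- On `(a, a + √v]` the density is at least its value at `a + √v`.
  have hpdf_le : ∀ x ∈ Ioc a (a + √v), gaussianPDFReal 0 v (a + √v) ≤ gaussianPDFReal 0 v x := by
    intro x hx
    simp only [gaussianPDFReal, sub_zero]
    gcongr <;> linarith [hx.1, hx.2]
  have hpdf_at : √v * gaussianPDFReal 0 v (a + √v)
      = (√(2 * π))⁻¹ * exp (-(a + √v) ^ 2 / (2 * v)) := by
    rw [gaussianPDFReal, sub_zero, Real.sqrt_mul (by positivity)]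
    field_simp
  have hexp : -(a ^ 2 / v) - 1 ≤ -(a + √v) ^ 2 / (2 * v) := by
    have hsq : (a + √v) ^ 2 ≤ 2 * a ^ 2 + 2 * v := by
      nlinarith [sq_nonneg (a - √v), Real.sq_sqrt hv0.le]
    calc -(a ^ 2 / v) - 1 = -(2 * a ^ 2 + 2 * v) / (2 * v) := by field_simp; ring
      _ ≤ -(a + √v) ^ 2 / (2 * v) := by gcongr
  calc (√(2 * π))⁻¹ * exp (-(a ^ 2 / v) - 1)
      ≤ (√(2 * π))⁻¹ * exp (-(a + √v) ^ 2 / (2 * v)) := by gcongr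
    _ = gaussianPDFReal 0 v (a + √v) * volume.real (Ioc a (a + √v)) := by
        rw [← hpdf_at, Real.volume_real_Ioc_of_le (by linarith), add_sub_cancel_left, mul_comm]
    _ ≤ ∫ x in Ioc a (a + √v), gaussianPDFReal 0 v x :=
        setIntegral_ge_of_const_le_real measurableSet_Ioc measure_Ioc_lt_top.ne hpdf_le
          (integrable_gaussianPDFReal 0 v).integrableOn
    _ ≤ ∫ x in Ioi a, gaussianPDFReal 0 v x :=
        setIntegral_mono_set (integrable_gaussianPDFReal 0 v).integrableOn
          (ae_of_all _ (gaussianPDFReal_nonneg 0 v)) Ioc_subset_Ioi_self.eventuallyLE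
    _ = (gaussianReal 0 v).real (Ioi a) := (measureReal_gaussianReal_eq_integral hv _).symm

end GaussianTails

section BorelCantelli

variable {Ω : Type*} {mΩ : MeasurableSpace Ω} {μ : Measure Ω}

lemma ae_eventually_notMem_of_summable_measureReal [IsFiniteMeasure μ] {A : ℕ → Set Ω}
    (h : Summable fun k ↦ μ.real (A k)) : ∀ᵐ ω ∂μ, ∀ᶠ k in atTop, ω ∉ A k := by
  refine ae_eventually_notMem ?_
  rw [tsum_congr fun k ↦ (ofReal_measureReal (μ := μ) (s := A k)).symm,
    ← ENNReal.ofReal_tsum_of_nonneg (fun _ ↦ measureReal_nonneg) h]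
  exact ENNReal.ofReal_ne_top

lemma ProbabilityTheory.IndepSet.indepFun_indicator_one {s t : Set Ω} (h : IndepSet s t μ) :
    IndepFun (s.indicator (1 : Ω → ℝ)) (t.indicator (1 : Ω → ℝ)) μ := by
  have hs : Measurable[MeasurableSpace.generateFrom {s}] (s.indicator (1 : Ω → ℝ)) :=
    measurable_const.indicator (MeasurableSpace.measurableSet_generateFrom rfl)
  have ht : Measurable[MeasurableSpace.generateFrom {t}] (t.indicator (1 : Ω → ℝ)) :=
    measurable_const.indicator (MeasurableSpace.measurableSet_generateFrom rfl)
  exact indep_of_indep_of_le_right (indep_of_indep_of_le_left h hs.comap_le) ht.comap_le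

lemma variance_indicator_one_le [IsProbabilityMeasure μ] {s : Set Ω} (hs : MeasurableSet s) :
    variance (s.indicator (1 : Ω → ℝ)) μ ≤ μ.real s := by
  have hsq : s.indicator (1 : Ω → ℝ) ^ 2 = s.indicator 1 := by
    ext ω; by_cases hω : ω ∈ s <;> simp [hω]
  have hL2 : MemLp (s.indicator (1 : Ω → ℝ)) 2 μ := memLp_indicator_const 2 hs 1 (by simp)
  rw [variance_eq_sub hL2, hsq, integral_indicator_one hs]
  nlinarith [sq_nonneg (μ.real s)]

/-- Chebyshev's inequality for the number `N` of events that occur: by pairwise independence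
`Var N ≤ E N`, so `P(N = 0) ≤ P(|N - E N| ≥ E N) ≤ 1 / E N`. -/
lemma measureReal_iInter_compl_mul_sum_le_one {ι : Type*} {A : ι → Set Ω} [IsProbabilityMeasure μ]
    (hA : ∀ k, MeasurableSet (A k)) (hind : Pairwise fun k l ↦ IndepSet (A k) (A l) μ)
    (s : Finset ι) : μ.real (⋂ k ∈ s, (A k)ᶜ) * ∑ k ∈ s, μ.real (A k) ≤ 1 := by
  set M := ∑ k ∈ s, μ.real (A k)
  set N : Ω → ℝ := ∑ k ∈ s, (A k).indicator 1
  have hL2 : ∀ k, MemLp ((A k).indicator (1 : Ω → ℝ)) 2 μ :=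
    fun k ↦ memLp_indicator_const 2 (hA k) 1 (by simp)
  have hmean : μ[N] = M := by
    simp only [N, Finset.sum_apply]
    rw [integral_finsetSum _ fun k _ ↦ (hL2 k).integrable one_le_two]
    exact Finset.sum_congr rfl fun k _ ↦ integral_indicator_one (hA k)
  have hvar : variance N μ ≤ M := by
    rw [IndepFun.variance_sum (fun k _ ↦ hL2 k)
      fun k _ l _ hkl ↦ (hind hkl).indepFun_indicator_one]
    exact Finset.sum_le_sum fun k _ ↦ variance_indicator_one_le (hA k)
  obtain hM | hM := (show 0 ≤ M from Finset.sum_nonneg fun k _ ↦ measureReal_nonneg).eq_or_lt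
  · rw [← hM, mul_zero]; exact zero_le_one
  have hsub : ⋂ k ∈ s, (A k)ᶜ ⊆ {ω | M ≤ |N ω - μ[N]|} := by
    intro ω hω
    simp only [mem_iInter, mem_compl_iff] at hω
    have hN : N ω = 0 := by
      simp only [N, Finset.sum_apply]
      exact Finset.sum_eq_zero fun k hk ↦ indicator_of_notMem (hω k hk) _
    simp [hN, hmean, abs_of_pos hM]
  have hcheb : μ.real (⋂ k ∈ s, (A k)ᶜ) ≤ variance N μ / M ^ 2 :=
    (measureReal_mono hsub).trans <| ENNReal.toReal_le_of_le_ofReal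
      (div_nonneg (variance_nonneg _ _) (sq_nonneg _))
      (meas_ge_le_variance_div_sq (memLp_finsetSum' s fun k _ ↦ hL2 k) hM)
  calc μ.real (⋂ k ∈ s, (A k)ᶜ) * M ≤ variance N μ / M ^ 2 * M := by gcongr
    _ ≤ M / M ^ 2 * M := by gcongr
    _ = 1 := by field_simp

lemma ae_frequently_mem_of_pairwise_indepSet [IsProbabilityMeasure μ] {A : ℕ → Set Ω}
    (hA : ∀ k, MeasurableSet (A k)) (hind : Pairwise fun k l ↦ IndepSet (A k) (A l) μ)
    (hsum : ¬ Summable fun k ↦ μ.real (A k)) : ∀ᵐ ω ∂μ, ∃ᶠ k in atTop, ω ∈ A k := by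
  have htail : ∀ m, μ (⋂ k, (A (k + m))ᶜ) = 0 := by
    intro m
    have hdiv : Tendsto (fun K ↦ ∑ k ∈ Finset.range K, μ.real (A (k + m))) atTop atTop :=
      (not_summable_iff_tendsto_nat_atTop_of_nonneg fun _ ↦ measureReal_nonneg).1
        (mt (summable_nat_add_iff (f := fun k ↦ μ.real (A k)) m).1 hsum)
    have hbound : ∀ K, μ.real (⋂ k, (A (k + m))ᶜ) * ∑ k ∈ Finset.range K, μ.real (A (k + m)) ≤ 1 :=
      fun K ↦ (mul_le_mul_of_nonneg_right
        (measureReal_mono fun ω hω ↦ mem_iInter₂.2 fun k _ ↦ mem_iInter.1 hω k)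
        (Finset.sum_nonneg fun _ _ ↦ measureReal_nonneg)).trans
        (measureReal_iInter_compl_mul_sum_le_one (fun k ↦ hA _)
          (fun k l hkl ↦ hind (add_left_injective m |>.ne hkl)) _)
    rw [← ofReal_measureReal, ENNReal.ofReal_eq_zero]
    by_contra! hpos
    obtain ⟨K, hK⟩ := (hdiv.eventually_gt_atTop (1 / μ.real (⋂ k, (A (k + m))ᶜ))).exists
    rw [div_lt_iff₀' hpos] at hK
    linarith [hbound K]
  have hnot : ∀ᵐ ω ∂μ, ∀ m, ω ∉ ⋂ k, (A (k + m))ᶜ :=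
    ae_all_iff.2 fun m ↦ measure_eq_zero_iff_ae_notMem.1 (htail m)
  filter_upwards [hnot] with ω hω
  refine frequently_atTop.2 fun m ↦ ?_
  obtain ⟨k, hk⟩ : ∃ k, ω ∈ A (k + m) := by simpa using hω m
  exact ⟨k + m, by omega, hk⟩

end BorelCantelli

section Independence

variable {Ω ι β γ : Type*} {mΩ : MeasurableSpace Ω} {μ : Measure Ω} [Fintype ι]
  [MeasurableSpace β] [MeasurableSpace γ]

lemma ProbabilityTheory.iIndepFun.measure_iInter_preimage_eq_prod {X : ι → Ω → β}
    (h : iIndepFun X μ) {s : ι → Set β} (hs : ∀ i, MeasurableSet (s i)) :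
    μ (⋂ i, X i ⁻¹' s i) = ∏ i, μ (X i ⁻¹' s i) := by
  simpa using h.measure_inter_preimage_eq_mul Finset.univ fun i _ ↦ hs i

lemma indepSet_iInter_preimage [IsProbabilityMeasure μ] {Y : ι → Ω → β} {Z : ι → Ω → γ}
    (hY : ∀ i, Measurable (Y i)) (hZ : ∀ i, Measurable (Z i))
    (hpair : iIndepFun (fun i ω ↦ (Y i ω, Z i ω)) μ) (hYZ : ∀ i, IndepFun (Y i) (Z i) μ)
    {s : ι → Set β} {t : ι → Set γ} (hs : ∀ i, MeasurableSet (s i))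
    (ht : ∀ i, MeasurableSet (t i)) :
    IndepSet (⋂ i, Y i ⁻¹' s i) (⋂ i, Z i ⁻¹' t i) μ := by
  have hYind : iIndepFun Y μ := hpair.comp (fun _ ↦ Prod.fst) fun _ ↦ measurable_fst
  have hZind : iIndepFun Z μ := hpair.comp (fun _ ↦ Prod.snd) fun _ ↦ measurable_snd
  rw [indepSet_iff_measure_inter_eq_mul (.iInter fun i ↦ hY i (hs i))
    (.iInter fun i ↦ hZ i (ht i)) μ, ← iInter_inter_distrib,
    hYind.measure_iInter_preimage_eq_prod hs, hZind.measure_iInter_preimage_eq_prod ht,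
    ← Finset.prod_mul_distrib]
  have hjoint := hpair.measure_iInter_preimage_eq_prod fun i ↦ (hs i).prod (ht i)
  simp only [mk_preimage_prod] at hjoint
  rw [hjoint]
  exact Finset.prod_congr rfl fun i _ ↦
    (hYZ i).measure_inter_preimage_eq_mul _ _ (hs i) (ht i)

end Independence

lemma pow_le_measureReal_iInter_preimage_Ioi {Ω ι : Type*} {mΩ : MeasurableSpace Ω}
    {P : Measure Ω} [IsProbabilityMeasure P] [Fintype ι] {X : ι → Ω → ℝ}
    (hX : ∀ i, Measurable (X i)) (hind : iIndepFun X P) {v : ℝ≥0} (hv : v ≠ 0)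
    (hlaw : ∀ i, P.map (X i) = gaussianReal 0 v) {a : ℝ} (ha : 0 ≤ a) :
    ((√(2 * π))⁻¹ * exp (-(a ^ 2 / v) - 1)) ^ Fintype.card ι ≤ P.real (⋂ i, X i ⁻¹' Ioi a) := by
  rw [measureReal_def, hind.measure_iInter_preimage_eq_prod fun _ ↦ measurableSet_Ioi,
    ENNReal.toReal_prod, ← Finset.card_univ, ← Finset.prod_const]
  refine Finset.prod_le_prod (fun _ _ ↦ by positivity) fun i _ ↦ ?_
  rw [← measureReal_def, ← map_measureReal_apply (hX i) measurableSet_Ioi, hlaw i]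
  exact inv_sqrt_two_pi_mul_exp_le_gaussianReal_Ioi hv ha

section Grid

noncomputable def gridTime (c k : ℕ) : ℝ := (c : ℝ)⁻¹ ^ k

/-- A law-of-the-iterated-logarithm level at time `t = c⁻⁽ᵏ⁺¹⁾`; the factor `4` makes the
Gaussian tail `exp (-gridLevel c k ^ 2 / (2 t)) = (k + 2)⁻²` summable. -/
noncomputable def gridLevel (c k : ℕ) : ℝ := √(4 * gridTime c (k + 1) * log (k + 2))

variable {c : ℕ}

lemma gridTime_pos (hc : 0 < c) (k : ℕ) : 0 < gridTime c k := by
  unfold gridTime; positivity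

lemma gridTime_antitone (hc : 1 ≤ c) : Antitone (gridTime c) := fun _ _ hkl ↦
  pow_le_pow_of_le_one (by positivity) (inv_le_one_of_one_le₀ (by exact_mod_cast hc)) hkl

lemma gridTime_le_one (hc : 1 ≤ c) (k : ℕ) : gridTime c k ≤ 1 :=
  gridTime_antitone hc (Nat.zero_le k)

lemma gridTime_sub_succ (hc : 0 < c) (k : ℕ) :
    gridTime c k - gridTime c (k + 1) = (c - 1) * gridTime c (k + 1) := by
  unfold gridTime
  rw [pow_succ]
  field_simp

lemma log_nat_add_two_pos (k : ℕ) : 0 < log (k + 2) :=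
  Real.log_pos (by linarith [k.cast_nonneg (α := ℝ)])

lemma gridLevel_nonneg (k : ℕ) : 0 ≤ gridLevel c k := sqrt_nonneg _

lemma gridLevel_sq (hc : 0 < c) (k : ℕ) :
    gridLevel c k ^ 2 = 4 * gridTime c (k + 1) * log (k + 2) :=
  Real.sq_sqrt (by have := gridTime_pos hc (k + 1); have := log_nat_add_two_pos k; positivity)

lemma exp_neg_gridLevel_sq_div (hc : 0 < c) (k : ℕ) :
    exp (-gridLevel c k ^ 2 / (2 * gridTime c (k + 1))) = ((k + 2 : ℝ) ^ 2)⁻¹ := by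
  have ht := (gridTime_pos hc (k + 1)).ne'
  rw [gridLevel_sq hc, show -(4 * gridTime c (k + 1) * log (k + 2)) / (2 * gridTime c (k + 1))
    = -log ((k + 2 : ℝ) ^ 2) by rw [Real.log_pow]; field_simp; push_cast; ring,
    exp_neg, exp_log (by positivity)]

end Grid

lemma pow_mul_inv_nat_add_two_le {m : ℕ} {a r : ℝ} (ha : 0 ≤ a) (hr : m * r ≤ 1) (k : ℕ) :
    (a * exp (-1)) ^ m * ((k : ℝ) + 2)⁻¹ ≤ (a * exp (-(r * log (k + 2)) - 1)) ^ m := by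
  have hlog := log_nat_add_two_pos k
  calc (a * exp (-1)) ^ m * ((k : ℝ) + 2)⁻¹ = (a * exp (-1)) ^ m * exp (-log (k + 2)) := by
        rw [exp_neg (log _), exp_log (by positivity)]
    _ ≤ (a * exp (-1)) ^ m * exp (m * -(r * log (k + 2))) := by gcongr; nlinarith
    _ = (a * exp (-(r * log (k + 2)) - 1)) ^ m := by
        rw [exp_nat_mul, exp_sub, exp_neg 1]; ring

lemma summable_inv_nat_add_two_sq : Summable fun k : ℕ ↦ ((k + 2 : ℝ) ^ 2)⁻¹ := by
  have h := (summable_nat_add_iff 2).2 (Real.summable_nat_pow_inv.2 one_lt_two)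
  exact_mod_cast h

section Brownian

variable {Ω ι : Type*} {mΩ : MeasurableSpace Ω} {P : Measure Ω} [IsProbabilityMeasure P]
  [Fintype ι] {B : ι → Ω → ℝ → ℝ} {c : ℕ}

lemma ae_eventually_abs_lt_gridLevel (hc : 1 ≤ c) (hmeas : ∀ i t, Measurable fun ω ↦ B i ω t)
    (hlaw : ∀ i t, 0 ≤ t → t ≤ 1 → P.map (fun ω ↦ B i ω t) = gaussianReal 0 t.toNNReal) :
    ∀ᵐ ω ∂P, ∀ᶠ k in atTop, ∀ i, |B i ω (gridTime c (k + 1))| < gridLevel c k := by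
  have hbound : ∀ k i, P.real {ω | gridLevel c k ≤ |B i ω (gridTime c (k + 1))|}
      ≤ 2 * ((k + 2 : ℝ) ^ 2)⁻¹ := by
    intro k i
    have ht := gridTime_pos hc (k + 1)
    have hsub := hasSubgaussianMGF_of_map_eq_gaussianReal (hmeas i _).aemeasurable
      (hlaw i _ ht.le (gridTime_le_one hc _))
    refine (hsub.measureReal_abs_ge_le (gridLevel_nonneg k)).trans_eq ?_
    rw [Real.coe_toNNReal _ ht.le, exp_neg_gridLevel_sq_div hc]
  have hsum :
      Summable fun k ↦ P.real (⋃ i, {ω | gridLevel c k ≤ |B i ω (gridTime c (k + 1))|}) := by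
    refine (summable_inv_nat_add_two_sq.mul_left ((Fintype.card ι : ℝ) * 2)).of_nonneg_of_le
      (fun _ ↦ measureReal_nonneg) fun k ↦ (measureReal_iUnion_fintype_le _).trans ?_
    refine (Finset.sum_le_sum fun i _ ↦ hbound k i).trans_eq ?_
    rw [Finset.sum_const, Finset.card_univ, nsmul_eq_mul, mul_assoc]
  filter_upwards [ae_eventually_notMem_of_summable_measureReal hsum] with ω hω
  simpa using hω

/-- The ratio `c` is so large that the `card ι` Gaussian tail factors together cost at most
`exp (-log (k + 2))`, which is not summable in `k`. -/
lemma le_measureReal_signed_increments (hc : 16 * Fintype.card ι + 1 < c)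
    (hmeas : ∀ i t, Measurable fun ω ↦ B i ω t)
    (hgauss : ∀ i, ∀ s t : ℝ, 0 ≤ s → s ≤ t → t ≤ 1 →
      P.map (fun ω ↦ B i ω t - B i ω s) = gaussianReal 0 (t - s).toNNReal)
    (hindep : iIndepFun (fun i ω ↦ B i ω) P) {ε : ι → ℝ} (hε : ∀ i, ε i ^ 2 = 1) (k : ℕ) :
    ((√(2 * π))⁻¹ * exp (-1)) ^ Fintype.card ι * ((k : ℝ) + 2)⁻¹ ≤
      P.real (⋂ i, (fun ω ↦ B i ω (gridTime c k) - B i ω (gridTime c (k + 1))) ⁻¹'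
        {x | 2 * gridLevel c k < ε i * x}) := by
  have hc0 : 0 < c := by omega
  have hcR : (16 * Fintype.card ι + 1 : ℝ) < c := by exact_mod_cast hc
  have ht := gridTime_pos hc0 (k + 1)
  have hw : 0 < gridTime c k - gridTime c (k + 1) := by
    rw [gridTime_sub_succ hc0]; exact mul_pos (by linarith) ht
  have hincr_meas : ∀ i, Measurable fun ω ↦ B i ω (gridTime c k) - B i ω (gridTime c (k + 1)) :=
    fun i ↦ (hmeas i _).sub (hmeas i _)
  have hlaw : ∀ i, P.map (fun ω ↦ ε i * (B i ω (gridTime c k) - B i ω (gridTime c (k + 1))))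
      = gaussianReal 0 (gridTime c k - gridTime c (k + 1)).toNNReal := fun i ↦
    map_const_mul_eq_gaussianReal (hincr_meas i) (hgauss i _ _ ht.le
      (gridTime_antitone hc0 k.le_succ) (gridTime_le_one hc0 k)) (hε i)
  have hind : iIndepFun (fun i ω ↦ ε i * (B i ω (gridTime c k) - B i ω (gridTime c (k + 1)))) P :=
    hindep.comp (fun i f ↦ ε i * (f (gridTime c k) - f (gridTime c (k + 1)))) fun i ↦ by fun_prop
  have hexponent : (2 * gridLevel c k) ^ 2 / (gridTime c k - gridTime c (k + 1)).toNNReal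
      = 16 / (c - 1) * log (k + 2) := by
    rw [Real.coe_toNNReal _ hw.le, mul_pow, gridLevel_sq hc0, gridTime_sub_succ hc0]
    field_simp
    ring
  refine le_trans ?_ (pow_le_measureReal_iInter_preimage_Ioi (fun i ↦ (hincr_meas i).const_mul _)
    hind (by simpa using hw) hlaw (by positivity [gridLevel_nonneg (c := c) k]))
  rw [hexponent]
  refine pow_mul_inv_nat_add_two_le (by positivity) ?_ k
  rw [← mul_div_assoc, div_le_one (by linarith)]
  linarith

lemma indepSet_iInter_increments (hmeas : ∀ i t, Measurable fun ω ↦ B i ω t)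
    (hincr : ∀ i, ∀ a b c d : ℝ, 0 ≤ a → a ≤ b → b ≤ c → c ≤ d → d ≤ 1 →
      IndepFun (fun ω ↦ B i ω b - B i ω a) (fun ω ↦ B i ω d - B i ω c) P)
    (hindep : iIndepFun (fun i ω ↦ B i ω) P) {t₀ t₁ t₂ t₃ : ℝ} (h₀ : 0 ≤ t₀) (h₁ : t₀ ≤ t₁)
    (h₂ : t₁ ≤ t₂) (h₃ : t₂ ≤ t₃) (h₄ : t₃ ≤ 1) {s u : ι → Set ℝ}
    (hs : ∀ i, MeasurableSet (s i)) (hu : ∀ i, MeasurableSet (u i)) :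
    IndepSet (⋂ i, (fun ω ↦ B i ω t₃ - B i ω t₂) ⁻¹' s i)
      (⋂ i, (fun ω ↦ B i ω t₁ - B i ω t₀) ⁻¹' u i) P :=
  indepSet_iInter_preimage (fun i ↦ (hmeas i _).sub (hmeas i _))
    (fun i ↦ (hmeas i _).sub (hmeas i _))
    (hindep.comp (fun _ f ↦ (f t₃ - f t₂, f t₁ - f t₀)) fun _ ↦ by fun_prop)
    (fun i ↦ (hincr i t₀ t₁ t₂ t₃ h₀ h₁ h₂ h₃ h₄).symm) hs hu

lemma ae_frequently_signed_increments_gt (hc : 16 * Fintype.card ι + 1 < c)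
    (hmeas : ∀ i t, Measurable fun ω ↦ B i ω t)
    (hgauss : ∀ i, ∀ s t : ℝ, 0 ≤ s → s ≤ t → t ≤ 1 →
      P.map (fun ω ↦ B i ω t - B i ω s) = gaussianReal 0 (t - s).toNNReal)
    (hincr : ∀ i, ∀ a b c d : ℝ, 0 ≤ a → a ≤ b → b ≤ c → c ≤ d → d ≤ 1 →
      IndepFun (fun ω ↦ B i ω b - B i ω a) (fun ω ↦ B i ω d - B i ω c) P)
    (hindep : iIndepFun (fun i ω ↦ B i ω) P) {ε : ι → ℝ} (hε : ∀ i, ε i ^ 2 = 1) :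
    ∀ᵐ ω ∂P, ∃ᶠ k in atTop, ∀ i,
      2 * gridLevel c k < ε i * (B i ω (gridTime c k) - B i ω (gridTime c (k + 1))) := by
  have hc1 : 1 ≤ c := by omega
  set A : ℕ → Set Ω := fun k ↦ ⋂ i, (fun ω ↦ B i ω (gridTime c k) - B i ω (gridTime c (k + 1)))
    ⁻¹' {x | 2 * gridLevel c k < ε i * x}
  have hsets : ∀ k i, MeasurableSet {x : ℝ | 2 * gridLevel c k < ε i * x} :=
    fun k i ↦ measurableSet_lt measurable_const (measurable_const_mul _)
  have hA : ∀ k, MeasurableSet (A k) :=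
    fun k ↦ .iInter fun i ↦ (hmeas i _).sub (hmeas i _) (hsets k i)
  have hlt : ∀ k l, k < l → IndepSet (A k) (A l) P := fun k l hkl ↦
    indepSet_iInter_increments hmeas hincr hindep (gridTime_pos hc1 _).le
      (gridTime_antitone hc1 l.le_succ) (gridTime_antitone hc1 hkl)
      (gridTime_antitone hc1 k.le_succ) (gridTime_le_one hc1 k) (hsets k) (hsets l)
  have hind : Pairwise fun k l ↦ IndepSet (A k) (A l) P := fun k l hkl ↦
    hkl.lt_or_gt.elim (hlt k l) fun h ↦ (hlt l k h).symm
  have hnsum : ¬ Summable fun k ↦ P.real (A k) := by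
    intro hsum
    have hpos : (0 : ℝ) < ((√(2 * π))⁻¹ * exp (-1)) ^ Fintype.card ι := by positivity
    have h := (hsum.of_nonneg_of_le (fun k ↦ by positivity)
      (le_measureReal_signed_increments hc hmeas hgauss hindep hε)).mul_left
        (((√(2 * π))⁻¹ * exp (-1)) ^ Fintype.card ι)⁻¹
    simp only [← mul_assoc, inv_mul_cancel₀ hpos.ne', one_mul] at h
    exact Real.not_summable_natCast_inv ((summable_nat_add_iff 2).1 (by exact_mod_cast h))
  filter_upwards [ae_frequently_mem_of_pairwise_indepSet hA hind hnsum] with ω hω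
  simpa [A] using hω

end Brownian

lemma le_zero_iff_of_lt_sign_mul_sub {p : Prop} [Decidable p] {x y s : ℝ} (hy : |y| < s)
    (hx : 2 * s < (if p then -1 else 1) * (x - y)) : x ≤ 0 ↔ p := by
  obtain ⟨hy₁, hy₂⟩ := abs_lt.1 hy
  by_cases hp : p
  · simp only [hp, if_true] at hx; simp only [hp, iff_true]; linarith
  · simp only [hp, if_false] at hx; simp only [hp, iff_false]; linarith

theorem stmt_13_general {Ω : Type*} [MeasurableSpace Ω] (P : Measure Ω) [IsProbabilityMeasure P]
    (n : ℕ) (B : Fin n → Ω → ℝ → ℝ)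
    (hmeas : ∀ i t, Measurable fun ω => B i ω t)
    (hzero : ∀ i ω, B i ω 0 = 0)
    (hgauss : ∀ i, ∀ s t : ℝ, 0 ≤ s → s ≤ t → t ≤ 1 →
      Measure.map (fun ω => B i ω t - B i ω s) P = gaussianReal 0 (Real.toNNReal (t - s)))
    (hincr : ∀ i, ∀ a b c d : ℝ, 0 ≤ a → a ≤ b → b ≤ c → c ≤ d → d ≤ 1 →
      IndepFun (fun ω => B i ω b - B i ω a) (fun ω => B i ω d - B i ω c) P)
    (hindep : iIndepFun
      (fun i ω => B i ω) P) :
    ∀ᵐ ω ∂P, ∀ S : Finset (Fin n), ∃ t y : ℚ,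
      0 ≤ (t : ℝ) ∧ (t : ℝ) ≤ 1 ∧ ∀ i : Fin n, (B i ω t ≤ (y : ℝ) ↔ i ∈ S) := by
  rw [ae_all_iff]
  intro S
  set c := 16 * n + 2
  have hc : 16 * Fintype.card (Fin n) + 1 < c := by simp [c]
  have hlaw : ∀ i t, 0 ≤ t → t ≤ 1 → P.map (fun ω ↦ B i ω t) = gaussianReal 0 t.toNNReal :=
    fun i t h₀ h₁ ↦ by simpa [hzero] using hgauss i 0 t le_rfl h₀ h₁
  have hε : ∀ i, (if i ∈ S then (-1 : ℝ) else 1) ^ 2 = 1 := fun i ↦ by split_ifs <;> norm_num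
  filter_upwards [ae_frequently_signed_increments_gt hc hmeas hgauss hincr hindep hε,
    ae_eventually_abs_lt_gridLevel (c := c) (by omega) hmeas hlaw] with ω hfreq hev
  obtain ⟨k, hinc, hval⟩ := (hfreq.and_eventually hev).exists
  have hcast : (((c : ℚ)⁻¹ ^ k : ℚ) : ℝ) = gridTime c k := by simp [gridTime]
  refine ⟨(c : ℚ)⁻¹ ^ k, 0, ?_, ?_, fun i ↦ ?_⟩ <;> rw [hcast]
  · exact (gridTime_pos (by omega) k).le
  · exact gridTime_le_one (by omega) k
  · exact Rat.cast_zero (α := ℝ) ▸ le_zero_iff_of_lt_sign_mul_sub (hval i) (hinc i)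

/-- Let `B 0, …, B (n-1)` be independent standard Brownian motions on `[0,1]` started
at `0` (characterized by continuous paths, Gaussian increments, and independent
increments). Then almost surely the countable class
`𝒞_Q = {C_{t,y} : t, y ∈ ℚ, 0 ≤ t ≤ 1}`, with `C_{t,y} = {z : z(t) ≤ y}`, shatters
`{B 1, …, B n}`: every subset of the paths can be picked out, i.e.
`card {C ∩ {B₁,…,B_n} : C ∈ 𝒞_Q} = 2^n`. -/
theorem stmt_13 {Ω : Type*} [MeasurableSpace Ω] (P : Measure Ω) [IsProbabilityMeasure P]
    (n : ℕ) (hn : 1 ≤ n) (B : Fin n → Ω → ℝ → ℝ)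
    (hmeas : ∀ i t, Measurable fun ω => B i ω t)
    (hcont : ∀ i ω, ContinuousOn (B i ω) (Set.Icc 0 1))
    (hzero : ∀ i ω, B i ω 0 = 0)
    (hgauss : ∀ i, ∀ s t : ℝ, 0 ≤ s → s ≤ t → t ≤ 1 →
      Measure.map (fun ω => B i ω t - B i ω s) P = gaussianReal 0 (Real.toNNReal (t - s)))
    (hincr : ∀ i, ∀ a b c d : ℝ, 0 ≤ a → a ≤ b → b ≤ c → c ≤ d → d ≤ 1 →
      IndepFun (fun ω => B i ω b - B i ω a) (fun ω => B i ω d - B i ω c) P)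
    (hindep : iIndepFun
      (fun i ω => B i ω) P) :
    ∀ᵐ ω ∂P, ∀ S : Finset (Fin n), ∃ t y : ℚ,
      0 ≤ (t : ℝ) ∧ (t : ℝ) ≤ 1 ∧ ∀ i : Fin n, (B i ω t ≤ (y : ℝ) ↔ i ∈ S) :=
  stmt_13_general P n B hmeas hzero hgauss hincr hindep
end

section
/- Let (X_t)_{t∈[0,T]} be a stochastic process, k > 0, β ∈ (0,1], η > 0, x₀ > 0, and suppose: (I) sup_t |F_t(x) − F_t(y)| ≤ k|x−y|^β for all x,y; (II) |X_t − X_s| ≤ Γ·φ(s,t) for all s,t, where P(Γ ≥ x) ≤ x^{−η} for x ≥ x₀; (III) φ(s,t)^α ≤ ρ_α(s,t) for some α > 0 with η(1/α − 2/β) ≥ 2. Then for all sufficiently small ε > 0: P*( sup_{ρ_α(s,t) ≤ ε} |F_t(X_s) − F_t(X_t)| ≥ ε² ) ≤ k^{η/β}·ε². -/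
open MeasureTheory Set

/-- Theorem 5 key estimate: under (I) Hölder-type equicontinuity of the cdfs,
(II) a Lipschitz-type modulus `|X_t − X_s| ≤ Γ·φ(s,t)` with polynomial tail for `Γ`,
and (III) `φ(s,t)^α ≤ ρ_α(s,t)` with `η(1/α − 2/β) ≥ 2`, one has, for all
sufficiently small `ε > 0`,
`P*(sup_{ρ_α(s,t) ≤ ε} |F_t(X_s) − F_t(X_t)| ≥ ε²) ≤ k^{η/β}·ε²`. -/
theorem stmt_17 {Ω : Type*} [MeasurableSpace Ω] (P : Measure Ω) [IsProbabilityMeasure P]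
    {ι : Type*} (X : ι → Ω → ℝ)
    (F : ι → ℝ → ℝ) (hF : ∀ t x, F t x = (P {ω | X t ω ≤ x}).toReal)
    (k β η x₀ α : ℝ) (hk : 0 < k) (hβ : 0 < β) (hβ1 : β ≤ 1) (hη : 0 < η)
    (hx₀ : 0 < x₀) (hα : 0 < α)
    (φ ρα : ι → ι → ℝ) (hφnn : ∀ s t, 0 ≤ φ s t)
    (hI : ∀ t : ι, ∀ x y : ℝ, |F t x - F t y| ≤ k * |x - y| ^ β)
    (Γ : Ω → ℝ) (hΓnn : ∀ ω, 0 ≤ Γ ω)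
    (hII : ∀ ω, ∀ s t : ι, |X t ω - X s ω| ≤ Γ ω * φ s t)
    (hΓtail : ∀ x : ℝ, x₀ ≤ x → (P {ω | x ≤ Γ ω}).toReal ≤ x ^ (-η))
    (hIII : ∀ s t : ι, φ s t ^ α ≤ ρα s t)
    (hαβη : 2 ≤ η * (1 / α - 2 / β)) :
    ∃ ε₀ > 0, ∀ ε : ℝ, 0 < ε → ε < ε₀ →
      P {ω | ∃ s t : ι, ρα s t ≤ ε ∧ ε ^ 2 ≤ |F t (X s ω) - F t (X t ω)|}
        ≤ ENNReal.ofReal (k ^ (η / β) * ε ^ 2) := by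
  have hc : 0 < 1 / α - 2 / β := by nlinarith
  set c : ℝ := 1 / α - 2 / β with hcdef
  set A : ℝ := k ^ (β⁻¹) * x₀ with hA
  have hApos : 0 < A := mul_pos (Real.rpow_pos_of_pos hk _) hx₀
  refine ⟨min 1 (A ^ (-c⁻¹)), lt_min one_pos (Real.rpow_pos_of_pos hApos _), ?_⟩
  intro ε hε hεlt
  have hε1 : ε < 1 := lt_of_lt_of_le hεlt (min_le_left _ _)
  have hεA : ε < A ^ (-c⁻¹) := lt_of_lt_of_le hεlt (min_le_right _ _)
  set x : ℝ := k ^ (-β⁻¹) * ε ^ (-c) with hxdef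
  -- x₀ ≤ x
  have hAx : A < ε ^ (-c) := by
    have h := Real.rpow_lt_rpow_of_neg hε hεA (neg_neg_of_pos hc)
    rw [← Real.rpow_mul hApos.le,
      show -c⁻¹ * -c = 1 by rw [neg_mul_neg, inv_mul_cancel₀ hc.ne'],
      Real.rpow_one] at h
    exact h
  have hx0x : x₀ ≤ x := by
    have h1 : k ^ (-β⁻¹) * A ≤ k ^ (-β⁻¹) * ε ^ (-c) :=
      mul_le_mul_of_nonneg_left hAx.le (Real.rpow_pos_of_pos hk _).le
    have h2 : k ^ (-β⁻¹) * A = x₀ := by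
      rw [hA, ← mul_assoc, ← Real.rpow_add hk, neg_add_cancel, Real.rpow_zero, one_mul]
    linarith
  -- event ⊆ {x ≤ Γ}
  have hsub : {ω | ∃ s t : ι, ρα s t ≤ ε ∧ ε ^ 2 ≤ |F t (X s ω) - F t (X t ω)|}
      ⊆ {ω | x ≤ Γ ω} := by
    intro ω hω
    obtain ⟨s, t, hρ, hFst⟩ := hω
    set d : ℝ := |X s ω - X t ω| with hd
    have hdnn : 0 ≤ d := abs_nonneg _
    have h1 : ε ^ 2 ≤ k * d ^ β := le_trans hFst (hI t (X s ω) (X t ω))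
    have hφle : φ s t ≤ ε ^ α⁻¹ := by
      have h2 : φ s t ^ α ≤ ε := le_trans (hIII s t) hρ
      have := Real.rpow_le_rpow (Real.rpow_nonneg (hφnn s t) α) h2
        (le_of_lt (inv_pos.mpr hα))
      rwa [Real.rpow_rpow_inv (hφnn s t) hα.ne'] at this
    have hdle : d ≤ Γ ω * ε ^ α⁻¹ := by
      have := hII ω s t
      rw [abs_sub_comm] at this
      exact le_trans this (mul_le_mul_of_nonneg_left hφle (hΓnn ω))
    have hdge : (ε ^ 2 / k) ^ β⁻¹ ≤ d := by
      have h2 : ε ^ 2 / k ≤ d ^ β := (div_le_iff₀' hk).mpr h1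
      have := Real.rpow_le_rpow (by positivity) h2 (le_of_lt (inv_pos.mpr hβ))
      rwa [Real.rpow_rpow_inv hdnn hβ.ne'] at this
    have hexp : -c + α⁻¹ = 2 * β⁻¹ := by rw [hcdef]; field_simp; ring
    have hkey : x * ε ^ α⁻¹ = (ε ^ 2 / k) ^ β⁻¹ := by
      rw [Real.div_rpow (by positivity) hk.le, div_eq_mul_inv, ← Real.rpow_neg hk.le,
        ← Real.rpow_natCast ε 2, ← Real.rpow_mul hε.le, hxdef, mul_assoc,
        ← Real.rpow_add hε]
      push_cast
      rw [hexp]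
      ring
    have : x * ε ^ α⁻¹ ≤ Γ ω * ε ^ α⁻¹ := by
      rw [hkey]; exact le_trans hdge hdle
    exact le_of_mul_le_mul_right this (Real.rpow_pos_of_pos hε _)
  -- conclude
  calc P {ω | ∃ s t : ι, ρα s t ≤ ε ∧ ε ^ 2 ≤ |F t (X s ω) - F t (X t ω)|}
      ≤ P {ω | x ≤ Γ ω} := measure_mono hsub
    _ = ENNReal.ofReal ((P {ω | x ≤ Γ ω}).toReal) :=
        (ENNReal.ofReal_toReal (measure_ne_top P _)).symm
    _ ≤ ENNReal.ofReal (k ^ (η / β) * ε ^ 2) := by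
        apply ENNReal.ofReal_le_ofReal
        refine le_trans (hΓtail x hx0x) ?_
        have hxeq : x ^ (-η) = k ^ (η / β) * ε ^ (c * η) := by
          rw [hxdef, Real.mul_rpow (Real.rpow_pos_of_pos hk _).le
            (Real.rpow_pos_of_pos hε _).le, ← Real.rpow_mul hk.le,
            ← Real.rpow_mul hε.le,
            show -β⁻¹ * -η = η / β by rw [div_eq_mul_inv]; ring,
            show -c * -η = c * η by ring]
        rw [hxeq]
        have h2cη : 2 ≤ c * η := by rw [mul_comm]; exact hαβη
        have : ε ^ (c * η) ≤ ε ^ (2:ℝ) :=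
          Real.rpow_le_rpow_of_exponent_ge hε hε1.le h2cη
        rw [show (2:ℝ) = ((2:ℕ):ℝ) by norm_num, Real.rpow_natCast] at this
        exact mul_le_mul_of_nonneg_left this (Real.rpow_nonneg hk.le _)
end
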